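/- arXiv:2006.07728 — 4 statements merged into one kernel-verified Lean document; each statement's English description precedes it below -/
import Mathlib

section
/- Let R be a ring (not necessarily commutative) and let u, v, ζ be units of R with ζ central, satisfying v·u = ζ²·(u·v). For integers a, b, c, d set u' = ζ^(ab)·u^a·v^b and v' = ζ^(cd)·u^c·v^d. Then for all integers m, n one has (u')^m·(v')^n = ζ^(a·b·m² + c·d·n² + 2·b·c·m·n)·u^(am+cn)·v^(bm+dn). -/
/-!
Write `W(i, j) = ζ^(ij) u^i v^j` for the Weyl-ordered monomials, so that `u' = W(a, b)` and
`v' = W(c, d)`. Commuting `v^j` past `u^k` costs `ζ^(2jk)`, which gives the product rule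
`W(i, j) W(k, l) = ζ^(jk - il) W(i + k, j + l)`. The exponent `jk - il` is a determinant, so it
vanishes on proportional vectors and `W(p, q)^m = W(pm, qm)`; one more product yields the formula.
-/

section

variable {G : Type*} [Group G]

theorem zpow_mul_zpow_eq_of_mul_eq_mul {u v q : G} (hqu : Commute q u) (hqv : Commute q v)
    (h : v * u = q * (u * v)) (i j : ℤ) : v ^ j * u ^ i = q ^ (i * j) * (u ^ i * v ^ j) := by
  have hv : SemiconjBy v (u ^ i) (q ^ i * u ^ i) := by
    rw [← hqu.mul_zpow]
    exact SemiconjBy.zpow_right (by rw [SemiconjBy, h, mul_assoc]) i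
  have hu : SemiconjBy (u ^ i) v (q ^ (-i) * v) := by
    rw [SemiconjBy, mul_assoc, hv.eq, mul_assoc, zpow_neg, inv_mul_cancel_left]
  have huv := (hu.zpow_right j).eq
  rw [(hqv.zpow_left _).mul_zpow, ← zpow_mul, mul_assoc] at huv
  rw [huv, ← mul_assoc, ← zpow_add]
  simp

/-- With `z = e(θ/2)` this is the paper's `e(½θij) U^i V^j`. -/
def weyl (z u v : G) (i j : ℤ) : G := z ^ (i * j) * (u ^ i * v ^ j)

variable {z u v : G}

theorem weyl_mul_weyl (hz : ∀ g, Commute z g) (h : v * u = z ^ 2 * (u * v)) (i j k l : ℤ) :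
    weyl z u v i j * weyl z u v k l = z ^ (j * k - i * l) * weyl z u v (i + k) (j + l) := by
  have hz2 : ∀ g, Commute (z ^ 2) g := fun g => (hz g).pow_left 2
  have hvu := zpow_mul_zpow_eq_of_mul_eq_mul (hz2 u) (hz2 v) h k j
  rw [← zpow_natCast, ← zpow_mul] at hvu
  have hzn : ∀ (n : ℤ) (g : G), Commute (z ^ n) g := fun n g => (hz g).zpow_left n
  calc weyl z u v i j * weyl z u v k l
      = z ^ (i * j) * z ^ (k * l) * (u ^ i * (v ^ j * u ^ k) * v ^ l) := by
        simp only [weyl, mul_assoc, (hzn (k * l) _).left_comm]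
    _ = z ^ (i * j) * z ^ (k * l) * z ^ ((2 : ℕ) * (k * j)) * (u ^ (i + k) * v ^ (j + l)) := by
        rw [hvu, zpow_add, zpow_add]
        simp only [mul_assoc, (hzn ((2 : ℕ) * (k * j)) _).left_comm]
    _ = z ^ (j * k - i * l) * weyl z u v (i + k) (j + l) := by
        rw [weyl, ← mul_assoc (z ^ (j * k - i * l)), ← zpow_add, ← zpow_add, ← zpow_add]
        congr 2
        push_cast; ring

theorem weyl_zpow (hz : ∀ g, Commute z g) (h : v * u = z ^ 2 * (u * v)) (p q m : ℤ) :
    weyl z u v p q ^ m = weyl z u v (p * m) (q * m) := by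
  have step : ∀ n : ℤ, weyl z u v (p * n) (q * n) * weyl z u v p q
      = weyl z u v (p * (n + 1)) (q * (n + 1)) := fun n => by
    rw [weyl_mul_weyl hz h, show q * n * p - p * n * q = 0 by ring, zpow_zero, one_mul]
    ring_nf
  induction m using Int.induction_on with
  | zero => simp [weyl]
  | succ n ih => rw [zpow_add_one, ih, step]
  | pred n ih =>
    rw [zpow_sub_one, ih, mul_inv_eq_iff_eq_mul, step, sub_add_cancel]

end

/-- In a (not necessarily commutative) ring `R`, if units `u, v, ζ` satisfy
`v * u = ζ^2 * (u * v)` with `ζ` central, and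
`u' = ζ^(ab) * u^a * v^b`, `v' = ζ^(cd) * u^c * v^d`, then
`u'^m * v'^n = ζ^(abm² + cdn² + 2bcmn) * (u^(am+cn) * v^(bm+dn))`. -/
theorem stmt2 (R : Type*) [Ring R] (u v ζ : Rˣ)
    (hζ : ∀ r : R, (ζ : R) * r = r * (ζ : R))
    (h : v * u = ζ ^ 2 * (u * v))
    (a b c d : ℤ)
    (u' v' : Rˣ)
    (hu' : u' = ζ ^ (a * b) * u ^ a * v ^ b)
    (hv' : v' = ζ ^ (c * d) * u ^ c * v ^ d) :
    ∀ m n : ℤ, u' ^ m * v' ^ n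
      = ζ ^ (a * b * m ^ 2 + c * d * n ^ 2 + 2 * b * c * m * n)
          * (u ^ (a * m + c * n) * v ^ (b * m + d * n)) := by
  have hcentral : ∀ w : Rˣ, Commute ζ w := fun w => Units.ext (hζ w)
  rw [mul_assoc] at hu' hv'
  intro m n
  rw [hu', hv', ← weyl, ← weyl, weyl_zpow hcentral h, weyl_zpow hcentral h,
    weyl_mul_weyl hcentral h, weyl, ← mul_assoc, ← zpow_add]
  congr 2
  ring
end

section
/- Let R be a ring (not necessarily commutative) and let u, v, ζ be units of R with ζ central, satisfying v·u = ζ²·(u·v). For integers a, b, c, d set u' = ζ^(ab)·u^a·v^b and v' = ζ^(cd)·u^c·v^d. Then v'·u' = ζ^(2(ad−bc))·(u'·v'). In particular, if ad − bc = 1 then u' and v' satisfy the same commutation relation v'·u' = ζ²·(u'·v') as u and v. -/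
private lemma aux2 {G : Type*} [Group G] (u v ζ : G)
    (hc : ∀ w : G, Commute ζ w)
    (h : v * u = ζ ^ 2 * (u * v)) :
    ∀ m n : ℤ, v ^ m * u ^ n = ζ ^ (2 * m * n) * (u ^ n * v ^ m) := by
  intro m n
  have h1 : SemiconjBy v u (ζ ^ 2 * u) := by
    unfold SemiconjBy; rw [mul_assoc, ← h]
  have h2 : v * u ^ n = ζ ^ (2 * n) * (u ^ n * v) := by
    have h2' := h1.zpow_right n
    rw [SemiconjBy, ((hc u).pow_left 2).mul_zpow] at h2'
    rw [h2', mul_assoc]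
    congr 1
    rw [← zpow_natCast ζ 2, ← zpow_mul]
    norm_num
  have h3 : SemiconjBy (u ^ n) v (ζ ^ (-(2 * n)) * v) := by
    unfold SemiconjBy
    rw [mul_assoc, h2, ← mul_assoc, ← zpow_add, neg_add_cancel, zpow_zero, one_mul]
  have h4 := h3.zpow_right m
  rw [SemiconjBy, ((hc v).zpow_left (-(2*n))).mul_zpow, ← zpow_mul] at h4
  have e : v ^ m * u ^ n = ζ ^ (2 * m * n) * (ζ ^ (-(2*n) * m) * v ^ m) * u ^ n := by
    rw [← mul_assoc, ← zpow_add]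
    have : 2 * m * n + -(2 * n) * m = 0 := by ring
    rw [this, zpow_zero, one_mul]
  rw [e, mul_assoc, mul_assoc, ← h4, ← mul_assoc, ← mul_assoc,
    ((hc (u^n)).zpow_left (2*m*n)).eq, mul_assoc]

/-- In a (not necessarily commutative) ring `R`, if units `u, v, ζ` satisfy
`v * u = ζ^2 * (u * v)` with `ζ` central, and
`u' = ζ^(ab) * u^a * v^b`, `v' = ζ^(cd) * u^c * v^d`, then
`v' * u' = ζ^(2(ad - bc)) * (u' * v')`; in particular if `ad - bc = 1` then
`v' * u' = ζ^2 * (u' * v')`. -/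
theorem stmt3 (R : Type*) [Ring R] (u v ζ : Rˣ)
    (hζ : ∀ r : R, (ζ : R) * r = r * (ζ : R))
    (h : v * u = ζ ^ 2 * (u * v))
    (a b c d : ℤ)
    (u' v' : Rˣ)
    (hu' : u' = ζ ^ (a * b) * u ^ a * v ^ b)
    (hv' : v' = ζ ^ (c * d) * u ^ c * v ^ d) :
    v' * u' = ζ ^ (2 * (a * d - b * c)) * (u' * v')
      ∧ (a * d - b * c = 1 → v' * u' = ζ ^ 2 * (u' * v')) := by
  have hc : ∀ w : Rˣ, Commute ζ w := fun w => Units.ext (hζ w)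
  have key := aux2 u v ζ hc h
  have hmu : ∀ (k m : ℤ) (x : Rˣ), u ^ m * (ζ ^ k * x) = ζ ^ k * (u ^ m * x) := by
    intro k m x
    rw [← mul_assoc, ← ((hc (u ^ m)).zpow_left k).eq, mul_assoc]
  have hmv : ∀ (k m : ℤ) (x : Rˣ), v ^ m * (ζ ^ k * x) = ζ ^ k * (v ^ m * x) := by
    intro k m x
    rw [← mul_assoc, ← ((hc (v ^ m)).zpow_left k).eq, mul_assoc]
  have key' : ∀ (m n : ℤ) (x : Rˣ), v ^ m * (u ^ n * x)
      = ζ ^ (2 * m * n) * (u ^ n * (v ^ m * x)) := by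
    intro m n x
    rw [← mul_assoc, key m n]
    group
  have hupow : ∀ (m n : ℤ) (x : Rˣ), u ^ m * (u ^ n * x) = u ^ (m + n) * x := by
    intro m n x; rw [← mul_assoc, ← zpow_add]
  have hzz : ∀ (j k : ℤ) (x : Rˣ), ζ ^ j * (ζ ^ k * x) = ζ ^ (j + k) * x := by
    intro j k x; rw [← mul_assoc, ← zpow_add]
  have L : v' * u' = ζ ^ (c * d + (a * b + 2 * d * a)) * (u ^ (c + a) * v ^ (d + b)) := by
    rw [hu', hv']
    simp only [mul_assoc]
    rw [hmv, hmu, key' d a, hmu, hupow, ← zpow_add v, hzz, hzz]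
    congr 2
    ring
  have Rr : u' * v' = ζ ^ (a * b + (c * d + 2 * b * c)) * (u ^ (a + c) * v ^ (b + d)) := by
    rw [hu', hv']
    simp only [mul_assoc]
    rw [hmv, hmu, key' b c, hmu, hupow, ← zpow_add v, hzz, hzz]
    congr 2
    ring
  have main : v' * u' = ζ ^ (2 * (a * d - b * c)) * (u' * v') := by
    rw [L, Rr, add_comm c a, add_comm d b, ← mul_assoc (ζ ^ (2 * (a * d - b * c))),
      ← zpow_add]
    congr 2
    ring
  refine ⟨main, fun h1 => ?_⟩
  rw [main, h1, show (2 * (1:ℤ)) = ((2:ℕ):ℤ) by norm_num, zpow_natCast]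
end

section
/- Let R be a ring (not necessarily commutative) and let u, v, ζ be units of R with ζ central, satisfying v·u = ζ²·(u·v). Then for all integers a, b, the inverse of ζ^(ab)·u^a·v^b equals ζ^(ab)·u^(−a)·v^(−b). -/
/-- In a (not necessarily commutative) ring `R`, if units `u, v, ζ` satisfy
`v * u = ζ^2 * (u * v)` with `ζ` central, then for all integers `a, b`, the inverse
of `ζ^(ab) * u^a * v^b` is `ζ^(ab) * u^(-a) * v^(-b)`. -/
theorem stmt4 (R : Type*) [Ring R] (u v ζ : Rˣ)
    (hζ : ∀ r : R, (ζ : R) * r = r * (ζ : R))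
    (h : v * u = ζ ^ 2 * (u * v)) :
    ∀ a b : ℤ, (ζ ^ (a * b) * u ^ a * v ^ b)⁻¹
      = ζ ^ (a * b) * u ^ (-a) * v ^ (-b) := by
  have hc : ∀ w : Rˣ, Commute ζ w := fun w => Units.ext (hζ w)
  have hcz : ∀ (n : ℤ) (w : Rˣ), ζ ^ n * w = w * ζ ^ n :=
    fun n w => ((hc w).zpow_left n).eq
  -- v * u^a * v⁻¹ = ζ^(2a) * u^a
  have e2 : ∀ a : ℤ, v * u ^ a * v⁻¹ = ζ ^ (2 * a) * u ^ a := by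
    intro a
    have conj1 : v * u ^ a * v⁻¹ = (v * u * v⁻¹) ^ a := by
      have h0 := map_zpow (MulAut.conj v) u a
      simp only [MulAut.conj_apply] at h0
      exact h0
    calc v * u ^ a * v⁻¹ = (v * u * v⁻¹) ^ a := conj1
      _ = (ζ ^ 2 * u) ^ a := by rw [h]; group
      _ = (ζ ^ 2) ^ a * u ^ a := ((hc u).pow_left 2).mul_zpow a
      _ = ζ ^ (2 * a) * u ^ a := by
          rw [← zpow_natCast ζ 2, ← zpow_mul]; norm_num
  -- u^(-a) * v * u^a = ζ^(2a) * v
  have e3 : ∀ a : ℤ, u ^ (-a) * v * u ^ a = ζ ^ (2 * a) * v := by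
    intro a
    have := e2 a
    have h2 : v * u ^ a = ζ ^ (2 * a) * u ^ a * v := by
      rw [← this]; group
    calc u ^ (-a) * v * u ^ a = u ^ (-a) * (v * u ^ a) := by group
      _ = u ^ (-a) * (ζ ^ (2 * a) * u ^ a * v) := by rw [h2]
      _ = u ^ (-a) * (u ^ a * ζ ^ (2 * a) * v) := by rw [hcz (2*a) (u ^ a)]
      _ = ζ ^ (2 * a) * v := by group
  -- key commutation
  have key : ∀ a b : ℤ, v ^ b * u ^ a = ζ ^ (2 * (a * b)) * (u ^ a * v ^ b) := by
    intro a b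
    have conj2 : u ^ (-a) * v ^ b * u ^ a = (u ^ (-a) * v * u ^ a) ^ b := by
      rw [zpow_neg]
      have h0 := map_zpow (MulAut.conj (u ^ a)⁻¹) v b
      simp only [MulAut.conj_apply, inv_inv] at h0
      exact h0
    have e4 : u ^ (-a) * v ^ b * u ^ a = ζ ^ (2 * (a * b)) * v ^ b := by
      calc u ^ (-a) * v ^ b * u ^ a = (u ^ (-a) * v * u ^ a) ^ b := conj2
        _ = (ζ ^ (2 * a) * v) ^ b := by rw [e3]
        _ = (ζ ^ (2 * a)) ^ b * v ^ b := ((hc v).zpow_left (2*a)).mul_zpow b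
        _ = ζ ^ (2 * (a * b)) * v ^ b := by rw [← zpow_mul]; ring_nf
    have : u ^ a * (u ^ (-a) * v ^ b * u ^ a) = u ^ a * (ζ ^ (2 * (a * b)) * v ^ b) := by
      rw [e4]
    calc v ^ b * u ^ a = u ^ a * (u ^ (-a) * v ^ b * u ^ a) := by group
      _ = u ^ a * (ζ ^ (2 * (a * b)) * v ^ b) := this
      _ = u ^ a * ζ ^ (2 * (a * b)) * v ^ b := by group
      _ = ζ ^ (2 * (a * b)) * u ^ a * v ^ b := by rw [← hcz (2*(a*b)) (u ^ a)]
      _ = ζ ^ (2 * (a * b)) * (u ^ a * v ^ b) := by group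
  intro a b
  have k2 : v ^ b * u ^ (-a) = ζ ^ (2 * (-a * b)) * (u ^ (-a) * v ^ b) := key (-a) b
  symm
  rw [eq_inv_iff_mul_eq_one]
  calc ζ ^ (a * b) * u ^ (-a) * v ^ (-b) * (ζ ^ (a * b) * u ^ a * v ^ b)
      = ζ ^ (a * b) * ζ ^ (a * b) * (u ^ (-a) * (v ^ (-b) * (u ^ a * v ^ b))) := by
        rw [show ζ ^ (a*b) * u ^ (-a) * v ^ (-b) * (ζ ^ (a*b) * u ^ a * v ^ b)
          = ζ ^ (a*b) * (u ^ (-a) * (v ^ (-b) * ζ ^ (a*b)) * (u ^ a * v ^ b)) by group,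
          ← hcz (a*b) (v ^ (-b)),
          show ζ ^ (a*b) * (u ^ (-a) * (ζ ^ (a*b) * v ^ (-b)) * (u ^ a * v ^ b))
          = ζ ^ (a*b) * ((u ^ (-a) * ζ ^ (a*b)) * (v ^ (-b) * (u ^ a * v ^ b))) by group,
          ← hcz (a*b) (u ^ (-a))]
        group
      _ = ζ ^ (2 * (a * b)) * (u ^ (-a) * (v ^ (-b) * u ^ a * v ^ b)) := by group
      _ = ζ ^ (2 * (a * b)) * (u ^ (-a) * (ζ ^ (2 * (a * -b)) * (u ^ a * v ^ (-b)) * v ^ b)) := by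
        rw [key a (-b)]
      _ = ζ ^ (2 * (a * b)) * ζ ^ (2 * (a * -b)) * (u ^ (-a) * (u ^ a * v ^ (-b) * v ^ b)) := by
        rw [show u ^ (-a) * (ζ ^ (2 * (a * -b)) * (u ^ a * v ^ (-b)) * v ^ b)
          = u ^ (-a) * ζ ^ (2 * (a * -b)) * (u ^ a * v ^ (-b) * v ^ b) by group,
          ← hcz (2 * (a * -b)) (u ^ (-a))]
        group
      _ = 1 := by
        rw [← zpow_add]
        ring_nf
        group
end

section
/- Let M be an invertible 3×3 real matrix such that for every integer n, every entry of M^n (integer powers, using M⁻¹ for negative n) is a half-integer, i.e., lies in (1/2)·ℤ. Then det M = 1 or det M = −1. -/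
/-- If `M` is an invertible `3 × 3` real matrix all of whose integer powers have
half-integer entries, then `det M = ±1`. -/
theorem stmt12 (M : Matrix (Fin 3) (Fin 3) ℝ) (hM : IsUnit M)
    (h : ∀ n : ℤ, ∀ i j : Fin 3, ∃ m : ℤ, 2 * (M ^ n) i j = (m : ℝ)) :
    M.det = 1 ∨ M.det = -1 := by
  have hd : IsUnit M.det := (Matrix.isUnit_iff_isUnit_det M).mp hM
  have hd0 : M.det ≠ 0 := hd.ne_zero
  have detz : ∀ n : ℤ, (M ^ n).det = M.det ^ n := by
    intro n
    cases n with
    | ofNat n => simp [Matrix.det_pow]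
    | negSucc n =>
        rw [zpow_negSucc, Matrix.det_nonsing_inv, Matrix.det_pow, zpow_negSucc,
          Ring.inverse_eq_inv']
  have key : ∀ n : ℤ, ∃ k : ℤ, 8 * M.det ^ n = (k : ℝ) := by
    intro n
    obtain ⟨m00, h00⟩ := h n 0 0
    obtain ⟨m01, h01⟩ := h n 0 1
    obtain ⟨m02, h02⟩ := h n 0 2
    obtain ⟨m10, h10⟩ := h n 1 0
    obtain ⟨m11, h11⟩ := h n 1 1
    obtain ⟨m12, h12⟩ := h n 1 2
    obtain ⟨m20, h20⟩ := h n 2 0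
    obtain ⟨m21, h21⟩ := h n 2 1
    obtain ⟨m22, h22⟩ := h n 2 2
    refine ⟨m00 * m11 * m22 - m00 * m12 * m21 - m01 * m10 * m22 + m01 * m12 * m20 +
      m02 * m10 * m21 - m02 * m11 * m20, ?_⟩
    have e00 : (M ^ n) 0 0 = (m00 : ℝ) / 2 := by linarith
    have e01 : (M ^ n) 0 1 = (m01 : ℝ) / 2 := by linarith
    have e02 : (M ^ n) 0 2 = (m02 : ℝ) / 2 := by linarith
    have e10 : (M ^ n) 1 0 = (m10 : ℝ) / 2 := by linarith
    have e11 : (M ^ n) 1 1 = (m11 : ℝ) / 2 := by linarith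
    have e12 : (M ^ n) 1 2 = (m12 : ℝ) / 2 := by linarith
    have e20 : (M ^ n) 2 0 = (m20 : ℝ) / 2 := by linarith
    have e21 : (M ^ n) 2 1 = (m21 : ℝ) / 2 := by linarith
    have e22 : (M ^ n) 2 2 = (m22 : ℝ) / 2 := by linarith
    rw [← detz, Matrix.det_fin_three, e00, e01, e02, e10, e11, e12, e20, e21, e22]
    push_cast
    ring
  have habs : ∀ n : ℤ, (1 : ℝ) ≤ 8 * |M.det| ^ n := by
    intro n
    obtain ⟨k, hk⟩ := key n
    have hk0 : k ≠ 0 := by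
      rintro rfl
      simp only [Int.cast_zero] at hk
      exact zpow_ne_zero n hd0 (by linarith)
    have h1 : (1 : ℝ) ≤ |(k : ℝ)| := by
      rw [← Int.cast_abs]
      exact_mod_cast Int.one_le_abs hk0
    calc (1 : ℝ) ≤ |(k : ℝ)| := h1
      _ = |8 * M.det ^ n| := by rw [hk]
      _ = 8 * |M.det| ^ n := by
          have : |M.det ^ n| = |M.det| ^ n := by
            cases n with
            | ofNat n => simp [abs_pow]
            | negSucc n => simp [zpow_negSucc, abs_inv, abs_pow]
          rw [abs_mul, this]; norm_num
  have habs1 : |M.det| = 1 := by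
    rcases lt_trichotomy |M.det| 1 with hlt | heq | hgt
    · obtain ⟨n, hn⟩ := exists_pow_lt_of_lt_one (by norm_num : (0:ℝ) < 1/8) hlt
      have := habs n
      rw [zpow_natCast] at this
      linarith
    · exact heq
    · have hinv : |M.det|⁻¹ < 1 := inv_lt_one_of_one_lt₀ hgt
      obtain ⟨n, hn⟩ := exists_pow_lt_of_lt_one (by norm_num : (0:ℝ) < 1/8) hinv
      have := habs (-n)
      rw [zpow_neg, zpow_natCast, ← inv_pow] at this
      linarith
  rcases (abs_eq (by norm_num : (0:ℝ) ≤ 1)).mp habs1 with h1 | h1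
  · exact Or.inl h1
  · exact Or.inr h1
end
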